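/- Let H be a Hopf algebra with invertible antipode and B a braided-commutative Yetter–Drinfeld H-module algebra. For finite-dimensional left H-comodules V, W, the map T : (W ⊗ B) ⊗_B (V ⊗ B) → (V ⊗ W) ⊗ B given by (ζ ⊗ b) ⊗ (ξ ⊗ a) ↦ ξ₍₂₎ ⊗ ζ ⊗ (S⁻¹(ξ₍₁₎) ▷ b) a is a well-defined isomorphism of right B-modules, with inverse determined by ξ ⊗ ζ ⊗ a ↦ (ζ ⊗ 1) ⊗ (ξ ⊗ a). -/

import Mathlib

/-!
`T` respects the balancing relation because `Δ(S⁻¹ h) = S⁻¹ h₍₂₎ ⊗ S⁻¹ h₍₁₎` turns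
`S⁻¹(ξ₍₁₎) ▷ (b c)` into `(S⁻¹(ξ₍₂₎) ▷ b)(S⁻¹(ξ₍₁₎) ▷ c)`, and coassociativity of the coaction
of `V` identifies this with what `T` produces after `c` has been moved across by `π`. The map
`(ξ ⊗ ζ) ⊗ a ↦ (ζ ⊗ 1) ⊗ (ξ ⊗ a)` is a right inverse of `T` by counitality, and a left inverse
modulo the balancing relation since `(ζ ⊗ b) ⊗ x ≡ (ζ ⊗ 1) ⊗ π(b) x`.
The anti-comultiplicativity of `S` comes from `(S ⊗ S) ∘ τ ∘ Δ` being a left convolution inverse of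
`Δ`, whose right inverse is `Δ ∘ S`.
-/

open TensorProduct LinearMap

noncomputable section

variable (k H B : Type) [Field k]
variable [Ring H] [HopfAlgebra k H] [Ring B] [Algebra k B]

/-- The lifted action map `H ⊗ B → B`. -/
def actT (act : H →ₗ[k] B →ₗ[k] B) : H ⊗[k] B →ₗ[k] B := TensorProduct.lift act

/-- `(Δ x) ⊗ (a ⊗ b) ↦ (x₍₁₎ ▷ a)(x₍₂₎ ▷ b)`. -/
def maMap (act : H →ₗ[k] B →ₗ[k] B) : (H ⊗[k] H) ⊗[k] (B ⊗[k] B) →ₗ[k] B :=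
  (LinearMap.mul' k B) ∘ₗ (TensorProduct.map (actT k H B act) (actT k H B act)) ∘ₗ
    (TensorProduct.tensorTensorTensorComm k H H B B).toLinearMap

/-- `a ⊗ b ↦ b₍₂₎ (S⁻¹(b₍₁₎) ▷ a)`. -/
def braid (act : H →ₗ[k] B →ₗ[k] B) (Sinv : H →ₗ[k] H) (coact : B →ₗ[k] H ⊗[k] B) :
    B ⊗[k] B →ₗ[k] B :=
  (LinearMap.mul' k B) ∘ₗ (TensorProduct.comm k B B).toLinearMap
    ∘ₗ (TensorProduct.map (actT k H B act) LinearMap.id)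
    ∘ₗ (TensorProduct.map (TensorProduct.map Sinv LinearMap.id) LinearMap.id)
    ∘ₗ (TensorProduct.map (TensorProduct.comm k B H).toLinearMap LinearMap.id)
    ∘ₗ (TensorProduct.assoc k B H B).symm.toLinearMap
    ∘ₗ (TensorProduct.map LinearMap.id coact)

/-- `x ↦ x₍₁₎ ⊗ (x₍₂₎ ⊗ x₍₃₎)`. -/
def comul₂ : H →ₗ[k] H ⊗[k] (H ⊗[k] H) :=
  (TensorProduct.map LinearMap.id Coalgebra.comul) ∘ₗ Coalgebra.comul

/-- `(x₍₂₎ ⊗ x₍₃₎) ⊗ a₍₂₎ ↦ S(x₍₃₎) ⊗ (x₍₂₎ ▷ a₍₂₎)`. -/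
def innerYD (act : H →ₗ[k] B →ₗ[k] B) : (H ⊗[k] H) ⊗[k] B →ₗ[k] H ⊗[k] B :=
  (TensorProduct.map (HopfAlgebra.antipode (R := k)) (actT k H B act))
    ∘ₗ (TensorProduct.assoc k H H B).toLinearMap
    ∘ₗ (TensorProduct.map (TensorProduct.comm k H H).toLinearMap LinearMap.id)

/-- `x ⊗ a ↦ x₍₁₎ a₍₁₎ S(x₍₃₎) ⊗ (x₍₂₎ ▷ a₍₂₎)`, the right-hand side of the
Yetter–Drinfeld compatibility condition. -/
def rhsYD (act : H →ₗ[k] B →ₗ[k] B) (coact : B →ₗ[k] H ⊗[k] B) :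
    H ⊗[k] B →ₗ[k] H ⊗[k] B :=
  (TensorProduct.map (LinearMap.mul' k H) LinearMap.id)
    ∘ₗ (TensorProduct.assoc k H H B).symm.toLinearMap
    ∘ₗ (TensorProduct.map (LinearMap.mul' k H) (innerYD k H B act))
    ∘ₗ (TensorProduct.tensorTensorTensorComm k H (H ⊗[k] H) H B).toLinearMap
    ∘ₗ (TensorProduct.map (comul₂ k H) coact)

variable {k H B} in
/-- A braided-commutative Yetter–Drinfeld algebra structure on `B` over the Hopf
algebra `H` (with invertible antipode `Sinv`): `B` is a left `H`-module algebra
(action `act`), a left `H`-comodule algebra (coaction `coact`), the Yetter–Drinfeld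
compatibility holds, and braided commutativity `a b = b₍₂₎ (S⁻¹(b₍₁₎) ▷ a)` holds. -/
structure BraidedCommYD (act : H →ₗ[k] B →ₗ[k] B) (coact : B →ₗ[k] H ⊗[k] B)
    (Sinv : H →ₗ[k] H) : Prop where
  Sinv_antipode : ∀ x : H, Sinv (HopfAlgebra.antipode (R := k) x) = x
  antipode_Sinv : ∀ x : H, HopfAlgebra.antipode (R := k) (Sinv x) = x
  act_unit : ∀ a : B, act 1 a = a
  act_mulH : ∀ (x y : H) (a : B), act (x * y) a = act x (act y a)
  act_one : ∀ x : H, act x 1 = Coalgebra.counit (R := k) x • (1 : B)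
  act_mul : ∀ (x : H) (a b : B),
    act x (a * b) = maMap k H B act (Coalgebra.comul x ⊗ₜ[k] (a ⊗ₜ[k] b))
  coact_one : coact 1 = 1
  coact_mul : ∀ a b : B, coact (a * b) = coact a * coact b
  coact_coassoc : ∀ a : B,
    (TensorProduct.map Coalgebra.comul LinearMap.id) (coact a)
      = (TensorProduct.assoc k H H B).symm ((TensorProduct.map LinearMap.id coact) (coact a))
  coact_counit : ∀ a : B,
    (TensorProduct.lid k B) ((TensorProduct.map (Coalgebra.counit (R := k)) LinearMap.id) (coact a)) = a
  yd : ∀ (x : H) (a : B), coact (act x a) = rhsYD k H B act coact (x ⊗ₜ[k] a)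
  braided : ∀ a b : B, a * b = braid k H B act Sinv coact (a ⊗ₜ[k] b)

variable (V W : Type) [AddCommGroup V] [Module k V] [AddCommGroup W] [Module k W]

/-- `a ⊗ (h ⊗ b) ↦ (S⁻¹(h) ▷ a) b`. -/
def innerPi (act : H →ₗ[k] B →ₗ[k] B) (Sinv : H →ₗ[k] H) :
    B ⊗[k] (H ⊗[k] B) →ₗ[k] B :=
  (LinearMap.mul' k B)
    ∘ₗ (TensorProduct.map (actT k H B act) LinearMap.id)
    ∘ₗ (TensorProduct.map (TensorProduct.comm k B H).toLinearMap LinearMap.id)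
    ∘ₗ (TensorProduct.assoc k B H B).symm.toLinearMap
    ∘ₗ (TensorProduct.map LinearMap.id (TensorProduct.map Sinv LinearMap.id))

/-- The left `B`-action `π(a)(ξ ⊗ b) = ξ₍₂₎ ⊗ (S⁻¹(ξ₍₁₎) ▷ a) b` on the relative Hopf
module `V ⊗ B`, as a map `B ⊗ (V ⊗ B) → V ⊗ B`. -/
def piMap (act : H →ₗ[k] B →ₗ[k] B) (Sinv : H →ₗ[k] H)
    (coactV : V →ₗ[k] H ⊗[k] V) : B ⊗[k] (V ⊗[k] B) →ₗ[k] V ⊗[k] B :=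
  (TensorProduct.map LinearMap.id (innerPi k H B act Sinv))
    ∘ₗ (TensorProduct.leftComm k B V (H ⊗[k] B)).toLinearMap
    ∘ₗ (TensorProduct.map LinearMap.id (TensorProduct.assoc k V H B).toLinearMap)
    ∘ₗ (TensorProduct.map LinearMap.id
          (TensorProduct.map (TensorProduct.comm k H V).toLinearMap LinearMap.id))
    ∘ₗ (TensorProduct.map LinearMap.id (TensorProduct.map coactV LinearMap.id))

/-- The map `π : B → End(V ⊗ B)`, `π(a)(ξ ⊗ b) = ξ₍₂₎ ⊗ (S⁻¹(ξ₍₁₎) ▷ a) b`. -/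
def piAct (act : H →ₗ[k] B →ₗ[k] B) (Sinv : H →ₗ[k] H)
    (coactV : V →ₗ[k] H ⊗[k] V) : B →ₗ[k] (V ⊗[k] B) →ₗ[k] (V ⊗[k] B) :=
  TensorProduct.curry (piMap k H B V act Sinv coactV)

/-- `h ⊗ (b ⊗ a) ↦ (S⁻¹(h) ▷ b) a`. -/
def innerTT (act : H →ₗ[k] B →ₗ[k] B) (Sinv : H →ₗ[k] H) :
    H ⊗[k] (B ⊗[k] B) →ₗ[k] B :=
  (LinearMap.mul' k B)
    ∘ₗ (TensorProduct.map (actT k H B act) LinearMap.id)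
    ∘ₗ (TensorProduct.assoc k H B B).symm.toLinearMap
    ∘ₗ (TensorProduct.map Sinv LinearMap.id)

/-- `ζ ⊗ (h ⊗ ξ) ↦ (ξ ⊗ ζ) ⊗ h`. -/
def rearrangeTT : W ⊗[k] (H ⊗[k] V) →ₗ[k] (V ⊗[k] W) ⊗[k] H :=
  (TensorProduct.comm k H (V ⊗[k] W)).toLinearMap
    ∘ₗ (TensorProduct.map LinearMap.id (TensorProduct.comm k W V).toLinearMap)
    ∘ₗ (TensorProduct.leftComm k W H V).toLinearMap

/-- The map `T : (W ⊗ B) ⊗ (V ⊗ B) → (V ⊗ W) ⊗ B`,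
`(ζ ⊗ b) ⊗ (ξ ⊗ a) ↦ ξ₍₂₎ ⊗ ζ ⊗ (S⁻¹(ξ₍₁₎) ▷ b) a`. -/
def ttMap (act : H →ₗ[k] B →ₗ[k] B) (Sinv : H →ₗ[k] H)
    (coactV : V →ₗ[k] H ⊗[k] V) :
    (W ⊗[k] B) ⊗[k] (V ⊗[k] B) →ₗ[k] (V ⊗[k] W) ⊗[k] B :=
  (TensorProduct.map LinearMap.id (innerTT k H B act Sinv))
    ∘ₗ (TensorProduct.assoc k (V ⊗[k] W) H (B ⊗[k] B)).toLinearMap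
    ∘ₗ (TensorProduct.map (rearrangeTT k H V W) LinearMap.id)
    ∘ₗ (TensorProduct.tensorTensorTensorComm k W B (H ⊗[k] V) B).toLinearMap
    ∘ₗ (TensorProduct.map LinearMap.id (TensorProduct.map coactV LinearMap.id))

namespace HopfAlgebra

open Coalgebra WithConv

variable {R A : Type*} [CommSemiring R] [Semiring A] [HopfAlgebra R A]

lemma sum_antipode_tmul_mul_comul {ι : Type*} {w : A} (𝓡 : Repr R w ι) (v : A) :
    ∑ j ∈ 𝓡.index, (antipode R (𝓡.left j) ⊗ₜ[R] v) * comul (𝓡.right j) = 1 ⊗ₜ[R] (v * w) := by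
  let T : A ⊗[R] (A ⊗[R] A) →ₗ[R] A ⊗[R] A :=
    TensorProduct.map (LinearMap.mul' R A) (LinearMap.mulLeft R v) ∘ₗ
      (TensorProduct.assoc R A A A).symm.toLinearMap ∘ₗ
      TensorProduct.map (antipode R) LinearMap.id
  have coassoc := congr(T $(sum_tmul_tmul_eq 𝓡 (fun i ↦ ℛ R (𝓡.left i)) (fun i ↦ ℛ R (𝓡.right i))))
  simp only [T, map_sum, LinearMap.comp_apply, map_tmul, LinearEquiv.coe_coe, assoc_symm_tmul,
    LinearMap.id_apply, LinearMap.mul'_apply, LinearMap.mulLeft_apply, ← sum_tmul,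
    sum_antipode_mul_eq_algebraMap_counit] at coassoc
  simp only [← (ℛ R _).eq, Finset.mul_sum, Algebra.TensorProduct.tmul_mul_tmul, ← coassoc]
  simp only [Algebra.algebraMap_eq_smul_one, smul_tmul, ← tmul_sum, ← mul_smul_comm,
    ← Finset.mul_sum, sum_counit_smul]

lemma _root_.LinearMap.comul_left_inv :
    toConv (TensorProduct.map (antipode R) (antipode R) ∘ₗ (TensorProduct.comm R A A).toLinearMap
      ∘ₗ comul) * toConv comul = 1 := by
  ext a
  let Θ : A ⊗[R] (A ⊗[R] A) →ₗ[R] A ⊗[R] A :=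
    LinearMap.mul' R (A ⊗[R] A) ∘ₗ
      TensorProduct.map (TensorProduct.map (antipode R) (antipode R) ∘ₗ
        (TensorProduct.comm R A A).toLinearMap) comul ∘ₗ
      (TensorProduct.assoc R A A A).symm.toLinearMap
  have coassoc := congr(Θ $(sum_tmul_tmul_eq (ℛ R a) (fun i ↦ ℛ R ((ℛ R a).left i))
    (fun i ↦ ℛ R ((ℛ R a).right i))))
  simp only [Θ, map_sum, LinearMap.comp_apply, map_tmul, LinearEquiv.coe_coe, assoc_symm_tmul,
    LinearMap.mul'_apply, comm_tmul, sum_antipode_tmul_mul_comul, ← Finset.sum_mul] at coassoc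
  rw [(ℛ R a).convMul_apply]
  simp only [LinearMap.comp_apply, LinearEquiv.coe_coe]
  conv_lhs => enter [2, i, 1]; rw [← (ℛ R ((ℛ R a).left i)).eq]
  simp only [map_sum, comm_tmul, map_tmul, coassoc, ← tmul_sum,
    sum_antipode_mul_eq_algebraMap_counit]
  simp [Algebra.algebraMap_eq_smul_one, Algebra.TensorProduct.one_def]

lemma comul_antipode (a : A) :
    comul (antipode R a)
      = TensorProduct.map (antipode R) (antipode R) (TensorProduct.comm R A A (comul a)) := by
  have := left_inv_eq_right_inv (LinearMap.comul_left_inv (R := R) (A := A))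
    LinearMap.comul_right_inv
  exact congr(ofConv $this a).symm

lemma comul_apply_of_antipode_inverse (Sinv : A →ₗ[R] A) (h₁ : ∀ x, Sinv (antipode R x) = x)
    (h₂ : ∀ x, antipode R (Sinv x) = x) (a : A) :
    comul (Sinv a) = TensorProduct.map Sinv Sinv (TensorProduct.comm R A A (comul a)) := by
  conv_rhs => rw [← h₂ a, comul_antipode]
  induction comul (R := R) (Sinv a) using TensorProduct.induction_on with
  | zero => simp
  | tmul x y => simp [h₁]
  | add t₁ t₂ ih₁ ih₂ =>
    simp only [map_add]
    rw [← ih₁, ← ih₂]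

end HopfAlgebra

lemma Submodule.bijective_liftQ_of_comp {R M P : Type*} [Ring R] [AddCommGroup M] [Module R M]
    [AddCommGroup P] [Module R P] {N : Submodule R M} {f : M →ₗ[R] P} (hf : N ≤ LinearMap.ker f)
    (g : P →ₗ[R] M) (hfg : f ∘ₗ g = LinearMap.id) (hgf : N.mkQ ∘ₗ g ∘ₗ f = N.mkQ) :
    Function.Bijective (N.liftQ f hf) := by
  refine Function.bijective_iff_has_inverse.mpr ⟨N.mkQ ∘ₗ g, fun q ↦ ?_, fun y ↦ congr($hfg y)⟩
  obtain ⟨x, rfl⟩ := N.mkQ_surjective q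
  exact congr($hgf x)

section TwistedTensor

variable {k H B V W}

def invActMul (act : H →ₗ[k] B →ₗ[k] B) (Sinv : H →ₗ[k] H) (c a : B) : H →ₗ[k] B :=
  LinearMap.mulRight k a ∘ₗ act.flip c ∘ₗ Sinv

@[simp] lemma invActMul_apply (act : H →ₗ[k] B →ₗ[k] B) (Sinv : H →ₗ[k] H) (c a : B) (h : H) :
    invActMul act Sinv c a h = act (Sinv h) c * a := rfl

variable (act : H →ₗ[k] B →ₗ[k] B) (Sinv : H →ₗ[k] H) (coactV : V →ₗ[k] H ⊗[k] V)

lemma maMap_tmul (t : H ⊗[k] H) (a b : B) :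
    maMap k H B act (t ⊗ₜ (a ⊗ₜ b)) = LinearMap.mul' k B (map (act.flip a) (act.flip b) t) := by
  induction t using TensorProduct.induction_on with
  | zero => simp
  | tmul x y => simp [maMap, actT]
  | add t₁ t₂ ih₁ ih₂ => simp only [add_tmul, map_add, ih₁, ih₂]

lemma ttMap_tmul (ζ : W) (b : B) (ξ : V) (a : B) :
    ttMap k H B V W act Sinv coactV ((ζ ⊗ₜ b) ⊗ₜ (ξ ⊗ₜ a))
      = map ((mk k V W).flip ζ) (invActMul act Sinv b a) (TensorProduct.comm k H V (coactV ξ)) := by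
  simp only [ttMap, LinearMap.comp_apply, map_tmul, LinearMap.id_apply]
  induction coactV ξ using TensorProduct.induction_on with
  | zero => simp
  | tmul h v => simp [rearrangeTT, innerTT, actT]
  | add t₁ t₂ ih₁ ih₂ => simp only [add_tmul, tmul_add, map_add, ih₁, ih₂]

lemma piAct_tmul (c : B) (ξ : V) (a : B) :
    piAct k H B V act Sinv coactV c (ξ ⊗ₜ a)
      = (invActMul act Sinv c a).lTensor V (TensorProduct.comm k H V (coactV ξ)) := by
  simp only [piAct, curry_apply, _root_.piMap, LinearMap.comp_apply, map_tmul, LinearMap.id_apply]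
  induction coactV ξ using TensorProduct.induction_on with
  | zero => simp
  | tmul h v => simp [innerPi, actT]
  | add t₁ t₂ ih₁ ih₂ => simp only [add_tmul, tmul_add, map_add, ih₁, ih₂]

lemma ttMap_mul_tmul_eq_tmul_piAct
    (hact_mul : ∀ (x : H) (a b : B),
      act x (a * b) = maMap k H B act (Coalgebra.comul x ⊗ₜ (a ⊗ₜ b)))
    (hcomul_Sinv : ∀ x : H, Coalgebra.comul (R := k) (Sinv x)
      = map Sinv Sinv (TensorProduct.comm k H H (Coalgebra.comul x)))
    (coactV_coassoc : ∀ v : V, map Coalgebra.comul LinearMap.id (coactV v)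
      = (TensorProduct.assoc k H H V).symm (map LinearMap.id coactV (coactV v)))
    (ζ : W) (b c : B) (ξ : V) (a : B) :
    ttMap k H B V W act Sinv coactV ((ζ ⊗ₜ (b * c)) ⊗ₜ (ξ ⊗ₜ a))
      = ttMap k H B V W act Sinv coactV
          ((ζ ⊗ₜ b) ⊗ₜ piAct k H B V act Sinv coactV c (ξ ⊗ₜ a)) := by
  let Φ : (H ⊗[k] H) ⊗[k] V →ₗ[k] (V ⊗[k] W) ⊗[k] B :=
    map ((mk k V W).flip ζ)
      (LinearMap.mul' k B ∘ₗ map (act.flip b ∘ₗ Sinv) (invActMul act Sinv c a)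
        ∘ₗ (TensorProduct.comm k H H).toLinearMap)
      ∘ₗ (TensorProduct.comm k (H ⊗[k] H) V).toLinearMap
  have act_mul_mul (h : H) : act (Sinv h) (b * c) * a = LinearMap.mul' k B
      (map (act.flip b ∘ₗ Sinv) (invActMul act Sinv c a)
        (TensorProduct.comm k H H (Coalgebra.comul h))) := by
    rw [hact_mul, maMap_tmul, hcomul_Sinv]
    induction Coalgebra.comul (R := k) h using TensorProduct.induction_on with
    | zero => simp
    | tmul x y => simp [mul_assoc]
    | add t₁ t₂ ih₁ ih₂ => simp only [map_add, add_mul, ih₁, ih₂]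
  have lhs (t : H ⊗[k] V) : map ((mk k V W).flip ζ) (invActMul act Sinv (b * c) a)
      (TensorProduct.comm k H V t) = Φ (map Coalgebra.comul LinearMap.id t) := by
    induction t using TensorProduct.induction_on with
    | zero => simp
    | tmul h v => simp [Φ, act_mul_mul]
    | add t₁ t₂ ih₁ ih₂ => simp only [map_add, ih₁, ih₂]
  have rhs (t : H ⊗[k] V) : ttMap k H B V W act Sinv coactV ((ζ ⊗ₜ b) ⊗ₜ
      (invActMul act Sinv c a).lTensor V (TensorProduct.comm k H V t))
      = Φ ((TensorProduct.assoc k H H V).symm (map LinearMap.id coactV t)) := by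
    induction t using TensorProduct.induction_on with
    | zero => simp
    | tmul h v =>
      simp only [TensorProduct.comm_tmul, lTensor_tmul, ttMap_tmul, map_tmul, LinearMap.id_apply]
      induction coactV v using TensorProduct.induction_on with
      | zero => simp
      | tmul h' v' => simp [Φ]
      | add t₁ t₂ ih₁ ih₂ => simp only [map_add, tmul_add, ih₁, ih₂]
    | add t₁ t₂ ih₁ ih₂ => simp only [map_add, tmul_add, ih₁, ih₂]
  rw [ttMap_tmul, piAct_tmul, lhs, rhs, coactV_coassoc]

lemma ttMap_map_mulRight (a : B) :
    ttMap k H B V W act Sinv coactV ∘ₗ map LinearMap.id (map LinearMap.id (LinearMap.mulRight k a))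
      = map LinearMap.id (LinearMap.mulRight k a) ∘ₗ ttMap k H B V W act Sinv coactV := by
  refine ext_fourfold' fun ζ b ξ a' ↦ ?_
  simp only [LinearMap.comp_apply, map_tmul, LinearMap.id_apply, LinearMap.mulRight_apply,
    ttMap_tmul]
  induction coactV ξ using TensorProduct.induction_on with
  | zero => simp
  | tmul h v => simp [mul_assoc]
  | add t₁ t₂ ih₁ ih₂ => simp only [map_add, ih₁, ih₂]

lemma ttMap_one_tmul (hact_one : ∀ x : H, act x 1 = Coalgebra.counit (R := k) x • (1 : B))
    (hcounit_Sinv : ∀ x : H, Coalgebra.counit (R := k) (Sinv x) = Coalgebra.counit x)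
    (coactV_counit : ∀ v : V,
      TensorProduct.lid k V (map (Coalgebra.counit (R := k)) LinearMap.id (coactV v)) = v)
    (ξ : V) (ζ : W) (a : B) :
    ttMap k H B V W act Sinv coactV ((ζ ⊗ₜ (1 : B)) ⊗ₜ (ξ ⊗ₜ a)) = (ξ ⊗ₜ ζ) ⊗ₜ a := by
  conv_rhs => rw [← coactV_counit ξ]
  rw [ttMap_tmul]
  induction coactV ξ using TensorProduct.induction_on with
  | zero => simp
  | tmul h v => simp [hact_one, hcounit_Sinv, smul_tmul']
  | add t₁ t₂ ih₁ ih₂ => simp only [map_add, add_tmul, ih₁, ih₂]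

variable (k H B V W) in
/-- The kernel of `(W ⊗ B) ⊗ (V ⊗ B) → (W ⊗ B) ⊗_B (V ⊗ B)`, where `V ⊗ B` carries the left
`B`-action `π`. -/
def balancingSubmodule : Submodule k ((W ⊗[k] B) ⊗[k] (V ⊗[k] B)) :=
  Submodule.span k {z | ∃ (w : W ⊗[k] B) (c : B) (v : V ⊗[k] B),
    z = (map LinearMap.id (LinearMap.mulRight k c) w) ⊗ₜ[k] v
      - w ⊗ₜ[k] (piAct k H B V act Sinv coactV c v)}

lemma balancingSubmodule_le_ker_ttMap
    (hact_mul : ∀ (x : H) (a b : B),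
      act x (a * b) = maMap k H B act (Coalgebra.comul x ⊗ₜ (a ⊗ₜ b)))
    (hcomul_Sinv : ∀ x : H, Coalgebra.comul (R := k) (Sinv x)
      = map Sinv Sinv (TensorProduct.comm k H H (Coalgebra.comul x)))
    (coactV_coassoc : ∀ v : V, map Coalgebra.comul LinearMap.id (coactV v)
      = (TensorProduct.assoc k H H V).symm (map LinearMap.id coactV (coactV v))) :
    balancingSubmodule k H B V W act Sinv coactV
      ≤ LinearMap.ker (ttMap k H B V W act Sinv coactV) := by
  refine Submodule.span_le.mpr ?_
  rintro _ ⟨w, c, v, rfl⟩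
  have balanced : ttMap k H B V W act Sinv coactV
        ∘ₗ (map LinearMap.id (LinearMap.mulRight k c)).rTensor _
      = ttMap k H B V W act Sinv coactV ∘ₗ (piAct k H B V act Sinv coactV c).lTensor _ :=
    ext_fourfold' fun ζ b ξ a ↦ by
      simpa using ttMap_mul_tmul_eq_tmul_piAct act Sinv coactV hact_mul hcomul_Sinv
        coactV_coassoc ζ b c ξ a
  simpa [sub_eq_zero] using congr($balanced (w ⊗ₜ v))

variable (k V W) in
def ttInv : (V ⊗[k] W) ⊗[k] B →ₗ[k] (W ⊗[k] B) ⊗[k] (V ⊗[k] B) :=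
  map ((mk k W B).flip 1) LinearMap.id ∘ₗ (TensorProduct.assoc k W V B).toLinearMap
    ∘ₗ map (TensorProduct.comm k V W).toLinearMap LinearMap.id

@[simp] lemma ttInv_tmul (ξ : V) (ζ : W) (a : B) :
    ttInv k V W ((ξ ⊗ₜ ζ) ⊗ₜ a) = (ζ ⊗ₜ (1 : B)) ⊗ₜ (ξ ⊗ₜ a) := by
  simp [ttInv]

lemma mkQ_comp_ttInv_comp_ttMap :
    (balancingSubmodule k H B V W act Sinv coactV).mkQ ∘ₗ ttInv k V W
        ∘ₗ ttMap k H B V W act Sinv coactV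
      = (balancingSubmodule k H B V W act Sinv coactV).mkQ := by
  refine ext_fourfold' fun ζ b ξ a ↦ ?_
  have hinv : ttInv k V W (ttMap k H B V W act Sinv coactV ((ζ ⊗ₜ b) ⊗ₜ (ξ ⊗ₜ a)))
      = (ζ ⊗ₜ 1) ⊗ₜ piAct k H B V act Sinv coactV b (ξ ⊗ₜ a) := by
    rw [ttMap_tmul, piAct_tmul]
    induction coactV ξ using TensorProduct.induction_on with
    | zero => simp
    | tmul h v => simp
    | add t₁ t₂ ih₁ ih₂ => simp only [map_add, tmul_add, ih₁, ih₂]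
  have rel : (ζ ⊗ₜ b) ⊗ₜ (ξ ⊗ₜ a) - (ζ ⊗ₜ 1) ⊗ₜ piAct k H B V act Sinv coactV b (ξ ⊗ₜ a)
      ∈ balancingSubmodule k H B V W act Sinv coactV :=
    Submodule.subset_span ⟨ζ ⊗ₜ 1, b, ξ ⊗ₜ a, by simp⟩
  simpa [hinv, Submodule.Quotient.eq] using Submodule.neg_mem _ rel

end TwistedTensor

theorem ttMap_isomorphism
    (act : H →ₗ[k] B →ₗ[k] B) (coact : B →ₗ[k] H ⊗[k] B) (Sinv : H →ₗ[k] H)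
    (hYD : BraidedCommYD act coact Sinv)
    (coactV : V →ₗ[k] H ⊗[k] V)
    (coactV_coassoc : ∀ v : V,
      (TensorProduct.map Coalgebra.comul LinearMap.id) (coactV v)
        = (TensorProduct.assoc k H H V).symm ((TensorProduct.map LinearMap.id coactV) (coactV v)))
    (coactV_counit : ∀ v : V,
      (TensorProduct.lid k V)
        ((TensorProduct.map (Coalgebra.counit (R := k)) LinearMap.id) (coactV v)) = v) :
    ∃ hker : Submodule.span k
        {z : (W ⊗[k] B) ⊗[k] (V ⊗[k] B) |
          ∃ (w : W ⊗[k] B) (c : B) (v : V ⊗[k] B),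
            z = ((TensorProduct.map LinearMap.id (LinearMap.mulRight k c)) w) ⊗ₜ[k] v
                - w ⊗ₜ[k] (piAct k H B V act Sinv coactV c v)}
        ≤ LinearMap.ker (ttMap k H B V W act Sinv coactV),
      -- the induced map on the balanced tensor product over `B` is bijective
      Function.Bijective (Submodule.liftQ _ (ttMap k H B V W act Sinv coactV) hker) ∧
      -- `T` is right `B`-linear
      (∀ (z : (W ⊗[k] B) ⊗[k] (V ⊗[k] B)) (a : B),
        ttMap k H B V W act Sinv coactV
            ((TensorProduct.map LinearMap.id
                (TensorProduct.map LinearMap.id (LinearMap.mulRight k a))) z)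
          = (TensorProduct.map LinearMap.id (LinearMap.mulRight k a))
              (ttMap k H B V W act Sinv coactV z)) ∧
      -- the inverse is determined by `ξ ⊗ ζ ⊗ a ↦ (ζ ⊗ 1) ⊗ (ξ ⊗ a)`
      (∀ (ξ : V) (ζ : W) (a : B),
        ttMap k H B V W act Sinv coactV ((ζ ⊗ₜ[k] (1 : B)) ⊗ₜ[k] (ξ ⊗ₜ[k] a))
          = (ξ ⊗ₜ[k] ζ) ⊗ₜ[k] a) := by
  have hcomul_Sinv := HopfAlgebra.comul_apply_of_antipode_inverse Sinv hYD.Sinv_antipode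
    hYD.antipode_Sinv
  have hcounit_Sinv (x : H) : Coalgebra.counit (R := k) (Sinv x) = Coalgebra.counit x := by
    simpa [hYD.antipode_Sinv] using (HopfAlgebra.counit_antipode (R := k) (Sinv x)).symm
  have hker := balancingSubmodule_le_ker_ttMap (W := W) act Sinv coactV hYD.act_mul hcomul_Sinv
    coactV_coassoc
  have ttMap_one := ttMap_one_tmul (W := W) act Sinv coactV hYD.act_one hcounit_Sinv coactV_counit
  refine ⟨hker, Submodule.bijective_liftQ_of_comp hker (ttInv k V W) ?_
    (mkQ_comp_ttInv_comp_ttMap act Sinv coactV),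
    fun z a ↦ congr($(ttMap_map_mulRight act Sinv coactV a) z), ttMap_one⟩
  exact ext_threefold fun ξ ζ a ↦ by simpa using ttMap_one ξ ζ a
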